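/- arXiv:2407.02686 — 2 statements merged into one kernel-verified Lean document; each statement's English description precedes it below -/
import Mathlib

section
/- Let H be a real symmetric N×N matrix, e ∈ ℝ^N a unit vector, c > 0, and set A := H + c·(e eᵀ). Suppose μ ∈ ℝ and v ∈ ℝ^N with v ≠ 0 satisfy A v = μ v and μ > ‖H‖. Then the series Σ_{k=0}^∞ ⟨e, H^k e⟩/μ^k converges absolutely and μ = c·Σ_{k=0}^∞ ⟨e, H^k e⟩/μ^k. -/
/-!
The eigenvalue equation reads `(μ - H) v = c ⟨e, v⟩ e`. As `‖H‖ < μ`, the operator `μ - H` is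
inverted by the Neumann series `∑ H^k / μ^(k+1)`, so `v = c ⟨e, v⟩ ∑ H^k e / μ^(k+1)`; in
particular `⟨e, v⟩ ≠ 0`, since otherwise `v = 0`. Pairing with `e` and cancelling `⟨e, v⟩` gives
`μ = c ∑ ⟨e, H^k e⟩ / μ^k`, while the terms are dominated by `‖e‖² ‖(H / μ)^k‖`.
-/

open Matrix

/-- The ℓ²-operator norm of a real `N × N` matrix: the norm of the induced linear map
from Euclidean `ℝ^N` to Euclidean `ℝ^N` (the largest singular value). -/
noncomputable def matrixL2OpNorm {N : ℕ} (M : Matrix (Fin N) (Fin N) ℝ) : ℝ :=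
  ‖LinearMap.toContinuousLinearMap (Matrix.toEuclideanLin M)‖

open scoped RealInnerProductSpace

namespace ContinuousLinearMap

theorem norm_inv_smul_lt_one {𝕜 E : Type*} [NontriviallyNormedField 𝕜] [SeminormedAddCommGroup E]
    [NormedSpace 𝕜 E] {T : E →L[𝕜] E} {μ : 𝕜} (hμ : ‖T‖ < ‖μ‖) : ‖μ⁻¹ • T‖ < 1 := by
  have hμ0 : μ ≠ 0 := norm_pos_iff.mp ((norm_nonneg T).trans_lt hμ)
  calc ‖μ⁻¹ • T‖ ≤ ‖μ⁻¹‖ * ‖T‖ := opNorm_smul_le _ _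
    _ < ‖μ⁻¹‖ * ‖μ‖ := by gcongr; simpa using hμ0
    _ = 1 := by rw [← norm_mul, inv_mul_cancel₀ hμ0, norm_one]

theorem hasSum_inv_pow_succ_smul_pow_apply {𝕜 E : Type*} [NontriviallyNormedField 𝕜]
    [NormedAddCommGroup E] [NormedSpace 𝕜 E] [CompleteSpace E]
    {T : E →L[𝕜] E} {μ : 𝕜} (hμ : ‖T‖ < ‖μ‖) {v w : E} (h : μ • v - T v = w) :
    HasSum (fun k : ℕ => (μ ^ (k + 1))⁻¹ • (T ^ k) w) v := by
  have hμ0 : μ ≠ 0 := norm_pos_iff.mp ((norm_nonneg T).trans_lt hμ)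
  set R := μ⁻¹ • T
  have hR : ‖R‖ < 1 := norm_inv_smul_lt_one hμ
  have hv : (∑' k, R ^ k) ((1 - R) v) = v := by
    rw [← mul_apply_eq_comp, geom_series_mul_neg R hR, one_apply_eq_self]
  have hw : (1 - R) v = μ⁻¹ • w := by
    rw [← h, smul_sub, inv_smul_smul₀ hμ0]; rfl
  rw [← hv]
  refine ((summable_geometric_of_norm_lt_one hR).hasSum.mapL (apply 𝕜 E ((1 - R) v))).congr_fun
    fun k => ?_
  simp only [apply_apply, hw, R, smul_pow, _root_.smul_apply, map_smul, smul_smul, pow_succ,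
    mul_inv, inv_pow]

theorem summable_abs_inner_pow_apply_div_pow {E : Type*}
    [NormedAddCommGroup E] [InnerProductSpace ℝ E]
    {T : E →L[ℝ] E} {μ : ℝ} (hμ : ‖T‖ < μ) (x : E) :
    Summable (fun k : ℕ => |⟪x, (T ^ k) x⟫ / μ ^ k|) := by
  have hR : ‖μ⁻¹ • T‖ < 1 := norm_inv_smul_lt_one (hμ.trans_le (Real.le_norm_self μ))
  refine ((summable_norm_geometric_of_norm_lt_one hR).mul_left (‖x‖ * ‖x‖)).of_nonneg_of_le
    (fun k => abs_nonneg _) fun k => ?_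
  calc |⟪x, (T ^ k) x⟫ / μ ^ k| = |⟪x, ((μ⁻¹ • T) ^ k) x⟫| := by
        rw [smul_pow, _root_.smul_apply, real_inner_smul_right, inv_pow, div_eq_inv_mul]
    _ ≤ ‖x‖ * ‖((μ⁻¹ • T) ^ k) x‖ := abs_real_inner_le_norm _ _
    _ ≤ ‖x‖ * (‖(μ⁻¹ • T) ^ k‖ * ‖x‖) := by gcongr; exact le_opNorm _ _
    _ = ‖x‖ * ‖x‖ * ‖(μ⁻¹ • T) ^ k‖ := by ring

theorem eq_mul_tsum_inner_pow_apply_div_pow {E : Type*}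
    [NormedAddCommGroup E] [InnerProductSpace ℝ E] [CompleteSpace E]
    {T : E →L[ℝ] E} {μ c : ℝ} (hμ : ‖T‖ < μ) {e v : E} (hv : v ≠ 0)
    (heig : T v + (c * ⟪e, v⟫) • e = μ • v) :
    μ = c * ∑' k : ℕ, ⟪e, (T ^ k) e⟫ / μ ^ k := by
  have hμ0 : 0 < μ := (norm_nonneg T).trans_lt hμ
  have hneumann := hasSum_inv_pow_succ_smul_pow_apply (hμ.trans_le (Real.le_norm_self μ))
    (w := (c * ⟪e, v⟫) • e) (by rw [← heig]; abel)
  have hx : ⟪e, v⟫ ≠ 0 := by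
    intro hx
    simp only [hx, mul_zero, zero_smul, map_zero, smul_zero] at hneumann
    exact hv (hneumann.unique hasSum_zero)
  have hinner : ⟪e, v⟫ = c * ⟪e, v⟫ / μ * ∑' k : ℕ, ⟪e, (T ^ k) e⟫ / μ ^ k := by
    rw [← tsum_mul_left]
    refine ((hneumann.mapL (innerSL ℝ e)).congr_fun fun k => ?_).tsum_eq.symm
    simp only [innerSL_apply_apply, map_smul, smul_eq_mul, pow_succ]
    field_simp
  field_simp at hinner
  linarith

end ContinuousLinearMap

theorem Matrix.add_smul_vecMulVec_self_mulVec {n α : Type*} [Fintype n] [CommSemiring α]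
    (H : Matrix n n α) (c : α) (e v : n → α) :
    (H + c • vecMulVec e e) *ᵥ v = H *ᵥ v + (c * (e ⬝ᵥ v)) • e := by
  rw [add_mulVec, smul_mulVec, vecMulVec_mulVec, op_smul_eq_smul, smul_smul]

theorem stmt_14_general (N : ℕ) (H : Matrix (Fin N) (Fin N) ℝ) (e : Fin N → ℝ) (c : ℝ)
    (A : Matrix (Fin N) (Fin N) ℝ) (hA : A = H + c • Matrix.vecMulVec e e)
    (μ : ℝ) (v : Fin N → ℝ) (hv : v ≠ 0)
    (heig : A *ᵥ v = μ • v) (hμ : matrixL2OpNorm H < μ) :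
    Summable (fun k : ℕ => |dotProduct e ((H ^ k) *ᵥ e) / μ ^ k|) ∧
      μ = c * ∑' k : ℕ, dotProduct e ((H ^ k) *ᵥ e) / μ ^ k := by
  set T := toEuclideanCLM (𝕜 := ℝ) H
  have hT : ‖T‖ < μ := hμ
  have hpow (k : ℕ) : e ⬝ᵥ (H ^ k *ᵥ e) = ⟪WithLp.toLp 2 e, (T ^ k) (WithLp.toLp 2 e)⟫ := by
    rw [← map_pow, inner_toEuclideanCLM]
  have heig' : T (WithLp.toLp 2 v) + (c * ⟪WithLp.toLp 2 e, WithLp.toLp 2 v⟫) • WithLp.toLp 2 e =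
      μ • WithLp.toLp 2 v := by
    rw [hA, add_smul_vecMulVec_self_mulVec] at heig
    rw [EuclideanSpace.inner_toLp_toLp, star_trivial, dotProduct_comm, toEuclideanCLM_toLp,
      ← WithLp.toLp_smul, ← WithLp.toLp_add, heig, WithLp.toLp_smul]
  simp only [hpow]
  exact ⟨T.summable_abs_inner_pow_apply_div_pow hT _,
    T.eq_mul_tsum_inner_pow_apply_div_pow hT (by simpa using hv) heig'⟩

/-- **Series representation of the principal eigenvalue of a rank-one perturbation.**
Let `H` be real symmetric, `e` a unit vector, `c > 0`, and `A = H + c e eᵀ`.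
If `A v = μ v` with `v ≠ 0` and `μ > ‖H‖`, then `Σ_k ⟨e, H^k e⟩/μ^k` converges
absolutely and `μ = c Σ_{k=0}^∞ ⟨e, H^k e⟩/μ^k`. -/
theorem stmt_14 (N : ℕ) (hN : 1 ≤ N)
    (H : Matrix (Fin N) (Fin N) ℝ) (hH : H.IsSymm)
    (e : Fin N → ℝ) (he : dotProduct e e = 1)
    (c : ℝ) (hc : 0 < c)
    (A : Matrix (Fin N) (Fin N) ℝ) (hA : A = H + c • Matrix.vecMulVec e e)
    (μ : ℝ) (v : Fin N → ℝ) (hv : v ≠ 0)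
    (heig : A *ᵥ v = μ • v) (hμ : matrixL2OpNorm H < μ) :
    Summable (fun k : ℕ => |dotProduct e ((H ^ k) *ᵥ e) / μ ^ k|) ∧
      μ = c * ∑' k : ℕ, dotProduct e ((H ^ k) *ᵥ e) / μ ^ k :=
  stmt_14_general N H e c A hA μ v hv heig hμ
end

section
/- Let N ≥ 1 and let H be a random real symmetric N×N matrix such that the entries {H_{i,j} : 1 ≤ i ≤ j ≤ N} are mutually independent, E[H_{i,j}] = 0, E[H_{i,j}²] = 1/N, and E[|H_{i,j}|³] ≤ (C₂/√N)³ for all i ≤ j and some constant C₂ > 0 (with H_{j,i} = H_{i,j}). Let e be the unit vector in ℝ^N all of whose entries equal 1/√N. Then: (i) E[⟨e, H e⟩²] ≤ 3/N; (ii) |E[⟨e, H³ e⟩]| ≤ 8C₂³/√N; (iii) |E[⟨e, H e⟩·⟨e, H² e⟩]| ≤ 8C₂³/(N√N); (iv) |E[⟨e, H e⟩³]| ≤ 8C₂³/(N²√N). -/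
/-!
Expand each quantity as a sum, over tuples of indices, of products of two or three entries of `H`,
and index the independent entries by `Sym2 (Fin N)`. A product of independent centered entries
has mean zero unless no entry occurs in it exactly once, so only products of two equal entries
(second moments) and of three equal entries (third moments) survive. An unordered index `{i, j}`
comes from at most two ordered pairs, so at most `2N²` resp. `4N²` terms survive.

The third moments need not be finite. If the cube of an entry is not integrable, then by
independence neither is the whole integrand, whose integral is then `0`.
-/

open MeasureTheory ProbabilityTheory Matrix Finset

namespace ProbabilityTheory

variable {Ω E : Type*} [MeasurableSpace Ω] {P : Measure Ω} [IsProbabilityMeasure P]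
  [NormedAddCommGroup E] [MeasurableSpace E] [BorelSpace E] [SecondCountableTopology E]

theorem IndepFun.integrable_left_of_integrable_add {U V : Ω → E}
    (hU : Measurable U) (hV : Measurable V) (hUV : IndepFun U V P)
    (h : Integrable (U + V) P) : Integrable U P := by
  have hmap : P.map (fun ω => (U ω, V ω)) = (P.map U).prod (P.map V) :=
    (indepFun_iff_map_prod_eq_prod_map_map hU.aemeasurable hV.aemeasurable).1 hUV
  have hadd : Integrable (fun p : E × E => p.1 + p.2) ((P.map U).prod (P.map V)) := by
    rw [← hmap, integrable_map_measure (by fun_prop) (hU.prodMk hV).aemeasurable]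
    exact h
  have := Measure.isProbabilityMeasure_map (μ := P) hV.aemeasurable
  -- by Fubini some translate `x ↦ x + y` is integrable for the law of `U`
  obtain ⟨y, hy⟩ := hadd.prod_left_ae.exists
  have hid : Integrable id (P.map U) := by
    convert hy.sub (integrable_const y) using 1
    ext x
    simp
  exact (integrable_map_measure aestronglyMeasurable_id hU.aemeasurable).1 hid

theorem iIndepFun.integrable_of_integrable_sum {ι : Type*} [Fintype ι] {Y : ι → Ω → E}
    (hY : ∀ i, Measurable (Y i)) (hind : iIndepFun Y P)
    (h : Integrable (fun ω => ∑ i, Y i ω) P) (i : ι) : Integrable (Y i) P := by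
  classical
  rw [← Finset.sum_fn] at h
  have hrest : Measurable (∑ j ∈ univ.erase i, Y j) := by fun_prop
  refine IndepFun.integrable_left_of_integrable_add (hY i) hrest
    (hind.indepFun_finsetSum_of_notMem hY (notMem_erase i univ)).symm ?_
  rwa [add_sum_erase _ _ (mem_univ i)]

end ProbabilityTheory

theorem sum_mul_mul_eq_sum_compl_add_sum_card_mul_pow_three {ι Q R : Type*} [Fintype ι]
    [DecidableEq ι] [Fintype Q] [DecidableEq Q] [CommSemiring R] (x : Q → R) (f g h : ι → Q)
    (D : Finset ι) (hD : ∀ t ∈ D, f t = g t ∧ f t = h t) :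
    ∑ t, x (f t) * (x (g t) * x (h t)) =
      ∑ t ∈ Dᶜ, x (f t) * (x (g t) * x (h t)) +
        ∑ q, (#{t ∈ D | f t = q} : R) * x q ^ 3 := by
  rw [← sum_compl_add_sum D]
  congr 1
  calc ∑ t ∈ D, x (f t) * (x (g t) * x (h t)) = ∑ t ∈ D, x (f t) ^ 3 :=
        sum_congr rfl fun t ht => by
          obtain ⟨hfg, hfh⟩ := hD t ht
          rw [← hfg, ← hfh, pow_three]
    _ = ∑ q, (#{t ∈ D | f t = q} : R) * x q ^ 3 := by
        simp_rw [← sum_fiberwise' D f fun q => x q ^ 3, sum_const, nsmul_eq_mul]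

structure IsCenteredIndepL2 {Ω Q : Type*} [MeasurableSpace Ω] (X : Q → Ω → ℝ)
    (P : Measure Ω) : Prop where
  measurable : ∀ q, Measurable (X q)
  iIndepFun : iIndepFun X P
  integral_eq_zero : ∀ q, ∫ ω, X q ω ∂P = 0
  memLp_two : ∀ q, MemLp (X q) 2 P

namespace IsCenteredIndepL2

variable {Ω Q ι : Type*} [MeasurableSpace Ω] {P : Measure Ω} {X : Q → Ω → ℝ}

theorem integrable_mul (hX : IsCenteredIndepL2 X P) (a b : Q) :
    Integrable (fun ω => X a ω * X b ω) P :=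
  (hX.memLp_two a).integrable_mul (hX.memLp_two b)

theorem integral_mul_eq_ite [DecidableEq Q] (hX : IsCenteredIndepL2 X P) (a b : Q) :
    ∫ ω, X a ω * X b ω ∂P = if a = b then ∫ ω, X a ω ^ 2 ∂P else 0 := by
  split_ifs with hab
  · simp_rw [hab, sq]
  · rw [(hX.iIndepFun.indepFun hab).integral_fun_mul_eq_mul_integral
      (hX.measurable a).aestronglyMeasurable (hX.measurable b).aestronglyMeasurable,
      hX.integral_eq_zero, zero_mul]

theorem integral_sum_mul [DecidableEq Q] [Fintype ι] {v : ℝ} (hX : IsCenteredIndepL2 X P)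
    (hv : ∀ q, ∫ ω, X q ω ^ 2 ∂P = v) (f g : ι → Q) :
    ∫ ω, ∑ t, X (f t) ω * X (g t) ω ∂P = #{t | f t = g t} * v := by
  rw [integral_finsetSum _ fun t _ => hX.integrable_mul _ _]
  simp_rw [hX.integral_mul_eq_ite, hv, sum_ite, sum_const_zero, add_zero, sum_const,
    nsmul_eq_mul]

theorem integrable_mul_mul_and_integral_eq_zero [IsFiniteMeasure P] (hX : IsCenteredIndepL2 X P)
    {a b d : Q} (hne : ¬(a = b ∧ a = d)) :
    Integrable (fun ω => X a ω * (X b ω * X d ω)) P ∧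
      ∫ ω, X a ω * (X b ω * X d ω) ∂P = 0 := by
  obtain ⟨x, y, z, hxy, hxz, heq⟩ : ∃ x y z, x ≠ y ∧ x ≠ z ∧
      (fun ω => X a ω * (X b ω * X d ω)) = fun ω => X x ω * (X y ω * X z ω) := by
    by_cases hab : a = b
    · subst hab
      have had : a ≠ d := fun h => hne ⟨rfl, h⟩
      exact ⟨d, a, a, had.symm, had.symm, by ext; ring⟩
    by_cases had : a = d
    · subst had
      exact ⟨b, a, a, Ne.symm hab, Ne.symm hab, by ext; ring⟩
    exact ⟨a, b, d, hab, had, rfl⟩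
  have hind := hX.iIndepFun.indepFun_mul_right hX.measurable x y z hxy hxz
  rw [heq]
  refine ⟨hind.integrable_mul ((hX.memLp_two x).integrable one_le_two) (hX.integrable_mul y z),
    ?_⟩
  exact (hind.integral_fun_mul_eq_mul_integral (hX.measurable x).aestronglyMeasurable
    ((hX.measurable y).mul (hX.measurable z)).aestronglyMeasurable).trans
    (by rw [hX.integral_eq_zero, zero_mul])

theorem abs_integral_sum_mul_pow_three_le [IsProbabilityMeasure P] [Fintype Q] {B : ℝ}
    (hX : IsCenteredIndepL2 X P) (hB : ∀ q, ∫ ω, |X q ω| ^ 3 ∂P ≤ B) (hB0 : 0 ≤ B)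
    {m : Q → ℝ} (hm : ∀ q, 0 ≤ m q) :
    |∫ ω, ∑ q, m q * X q ω ^ 3 ∂P| ≤ (∑ q, m q) * B := by
  by_cases hK : Integrable (fun ω => ∑ q, m q * X q ω ^ 3) P
  swap
  · rw [integral_undef hK, abs_zero]
    exact mul_nonneg (sum_nonneg fun q _ => hm q) hB0
  -- the summands are independent, so integrability of their sum passes to each of them
  have hcube : ∀ q, Integrable (fun ω => m q * X q ω ^ 3) P :=
    (hX.iIndepFun.comp (fun q x => m q * x ^ 3) fun q => by fun_prop).integrable_of_integrable_sum
      (fun q => ((hX.measurable q).pow_const 3).const_mul _) hK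
  rw [integral_finsetSum _ fun q _ => hcube q, sum_mul]
  refine (abs_sum_le_sum_abs _ _).trans (sum_le_sum fun q _ => ?_)
  rw [integral_const_mul, abs_mul, abs_of_nonneg (hm q)]
  refine mul_le_mul_of_nonneg_left ?_ (hm q)
  calc |∫ ω, X q ω ^ 3 ∂P| ≤ ∫ ω, |X q ω ^ 3| ∂P := abs_integral_le_integral_abs
    _ = ∫ ω, |X q ω| ^ 3 ∂P := by simp_rw [abs_pow]
    _ ≤ B := hB q

theorem abs_integral_sum_mul_mul_le [IsProbabilityMeasure P] [Fintype Q] [DecidableEq Q]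
    [Fintype ι] [DecidableEq ι] {B : ℝ} (hX : IsCenteredIndepL2 X P)
    (hB : ∀ q, ∫ ω, |X q ω| ^ 3 ∂P ≤ B) (hB0 : 0 ≤ B) (f g h : ι → Q) :
    |∫ ω, ∑ t, X (f t) ω * (X (g t) ω * X (h t) ω) ∂P|
      ≤ #{t | f t = g t ∧ f t = h t} * B := by
  set D : Finset ι := {t | f t = g t ∧ f t = h t}
  set m : Q → ℝ := fun q => #{t ∈ D | f t = q}
  have hsplit : ∀ ω, ∑ t, X (f t) ω * (X (g t) ω * X (h t) ω)
      = ∑ t ∈ Dᶜ, X (f t) ω * (X (g t) ω * X (h t) ω) + ∑ q, m q * X q ω ^ 3 :=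
    fun ω => sum_mul_mul_eq_sum_compl_add_sum_card_mul_pow_three (X · ω) f g h D
      fun t ht => (mem_filter.1 ht).2
  have hoff : ∀ t ∈ Dᶜ, Integrable (fun ω => X (f t) ω * (X (g t) ω * X (h t) ω)) P ∧
      ∫ ω, X (f t) ω * (X (g t) ω * X (h t) ω) ∂P = 0 := fun t ht =>
    hX.integrable_mul_mul_and_integral_eq_zero (by simpa [D] using ht)
  have hG : Integrable (fun ω => ∑ t ∈ Dᶜ, X (f t) ω * (X (g t) ω * X (h t) ω)) P :=
    integrable_finsetSum _ fun t ht => (hoff t ht).1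
  by_cases hF : Integrable (fun ω => ∑ t, X (f t) ω * (X (g t) ω * X (h t) ω)) P
  swap
  · rw [integral_undef hF, abs_zero]
    positivity
  have hK : Integrable (fun ω => ∑ q, m q * X q ω ^ 3) P := by
    refine (hF.sub hG).congr (ae_of_all _ fun ω => ?_)
    simp only [Pi.sub_apply, hsplit ω, add_sub_cancel_left]
  calc |∫ ω, ∑ t, X (f t) ω * (X (g t) ω * X (h t) ω) ∂P|
      = |∫ ω, ∑ q, m q * X q ω ^ 3 ∂P| := by
        simp_rw [hsplit]
        rw [integral_add hG hK, integral_finsetSum _ fun t ht => (hoff t ht).1,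
          sum_eq_zero fun t ht => (hoff t ht).2, zero_add]
    _ ≤ (∑ q, m q) * B := hX.abs_integral_sum_mul_pow_three_le hB hB0 fun q => by positivity
    _ = #D * B := by
        rw [card_eq_sum_card_fiberwise fun t _ => mem_coe.2 (mem_univ (f t))]
        push_cast
        rfl

end IsCenteredIndepL2

namespace Sym2

variable {n : Type*} [DecidableEq n]

theorem mem_pair_swap_of_mk_eq {p q : n × n} (h : s(q.1, q.2) = s(p.1, p.2)) :
    q ∈ ({p, p.swap} : Finset (n × n)) := by
  rw [mem_insert, mem_singleton]
  exact mk_eq_mk_iff.1 h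

theorem card_filter_mk_eq_mk_le [Fintype n] :
    #{t : (n × n) × (n × n) | s(t.1.1, t.1.2) = s(t.2.1, t.2.2)} ≤ 2 * Fintype.card n ^ 2 := by
  calc #{t : (n × n) × (n × n) | s(t.1.1, t.1.2) = s(t.2.1, t.2.2)}
      ≤ #(univ.biUnion fun p : n × n => {p} ×ˢ {p, p.swap}) := by
        refine card_le_card fun t ht => mem_biUnion.2 ⟨t.1, mem_univ _, ?_⟩
        exact mem_product.2
          ⟨mem_singleton_self _, mem_pair_swap_of_mk_eq (mem_filter.1 ht).2.symm⟩
    _ ≤ ∑ p : n × n, #({p} ×ˢ {p, p.swap}) := card_biUnion_le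
    _ ≤ ∑ _p : n × n, 1 * 2 := sum_le_sum fun p _ => by
        rw [card_product, card_singleton]
        exact Nat.mul_le_mul_left _ card_le_two
    _ = 2 * Fintype.card n ^ 2 := by simp [sq, mul_comm]

theorem card_filter_mk_eq_mk_and_mk_eq_mk_le [Fintype n] :
    #{t : (n × n) × (n × n) × (n × n) |
        s(t.1.1, t.1.2) = s(t.2.1.1, t.2.1.2) ∧ s(t.1.1, t.1.2) = s(t.2.2.1, t.2.2.2)}
      ≤ 4 * Fintype.card n ^ 2 := by
  calc #{t : (n × n) × (n × n) × (n × n) |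
        s(t.1.1, t.1.2) = s(t.2.1.1, t.2.1.2) ∧ s(t.1.1, t.1.2) = s(t.2.2.1, t.2.2.2)}
      ≤ #(univ.biUnion fun p : n × n => {p} ×ˢ ({p, p.swap} ×ˢ {p, p.swap})) := by
        refine card_le_card fun t ht => mem_biUnion.2 ⟨t.1, mem_univ _, ?_⟩
        obtain ⟨h₁, h₂⟩ := (mem_filter.1 ht).2
        exact mem_product.2 ⟨mem_singleton_self _, mem_product.2
          ⟨mem_pair_swap_of_mk_eq h₁.symm, mem_pair_swap_of_mk_eq h₂.symm⟩⟩
    _ ≤ ∑ p : n × n, #({p} ×ˢ ({p, p.swap} ×ˢ {p, p.swap})) := card_biUnion_le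
    _ ≤ ∑ _p : n × n, 1 * (2 * 2) := sum_le_sum fun p _ => by
        rw [card_product, card_product, card_singleton]
        exact Nat.mul_le_mul_left _ (Nat.mul_le_mul card_le_two card_le_two)
    _ = 4 * Fintype.card n ^ 2 := by simp [sq, mul_comm]

end Sym2

namespace Matrix

variable {n R : Type*} [Fintype n] [CommSemiring R] (A : Matrix n n R) (c : R)

theorem const_dotProduct_mulVec_const :
    (fun _ => c) ⬝ᵥ (A *ᵥ fun _ => c) = c ^ 2 * ∑ p : n × n, A p.1 p.2 := by
  simp only [dotProduct, mulVec, Fintype.sum_prod_type, mul_sum]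
  exact sum_congr rfl fun i _ => sum_congr rfl fun j _ => by ring

theorem const_dotProduct_mulVec_const_sq :
    ((fun _ => c) ⬝ᵥ (A *ᵥ fun _ => c)) ^ 2
      = c ^ 4 * ∑ t : (n × n) × (n × n), A t.1.1 t.1.2 * A t.2.1 t.2.2 := by
  simp only [const_dotProduct_mulVec_const, Fintype.sum_prod_type, sq, mul_sum, sum_mul]
  iterate 4 refine sum_congr rfl fun _ _ => ?_
  ring

theorem const_dotProduct_mulVec_const_pow_three :
    ((fun _ => c) ⬝ᵥ (A *ᵥ fun _ => c)) ^ 3 = c ^ 6 *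
      ∑ t : (n × n) × (n × n) × (n × n),
        A t.1.1 t.1.2 * (A t.2.1.1 t.2.1.2 * A t.2.2.1 t.2.2.2) := by
  simp only [const_dotProduct_mulVec_const, Fintype.sum_prod_type, pow_three, mul_sum, sum_mul]
  iterate 6 refine sum_congr rfl fun _ _ => ?_
  ring

variable [DecidableEq n]

theorem const_dotProduct_pow_three_mulVec_const :
    (fun _ => c) ⬝ᵥ (A ^ 3 *ᵥ fun _ => c) = c ^ 2 *
      ∑ t : n × n × n × n, A t.1 t.2.2.1 * (A t.2.2.1 t.2.2.2 * A t.2.2.2 t.2.1) := by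
  simp only [const_dotProduct_mulVec_const, pow_three, mul_apply, Fintype.sum_prod_type, mul_sum]

theorem const_dotProduct_mulVec_const_mul_const_dotProduct_sq_mulVec_const :
    (fun _ => c) ⬝ᵥ (A *ᵥ fun _ => c) * (fun _ => c) ⬝ᵥ (A ^ 2 *ᵥ fun _ => c) = c ^ 4 *
      ∑ t : (n × n) × (n × n) × n, A t.1.1 t.1.2 * (A t.2.1.1 t.2.2 * A t.2.2 t.2.1.2) := by
  rw [const_dotProduct_mulVec_const, const_dotProduct_mulVec_const, mul_mul_mul_comm, ← pow_add,
    sum_mul_sum]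
  simp only [sq A, mul_apply, Fintype.sum_prod_type, mul_sum]

end Matrix

theorem Matrix.IsSymm.apply_min_max {n α : Type*} [LinearOrder n] {A : Matrix n n α}
    (hA : A.IsSymm) (i j : n) : A (min i j) (max i j) = A i j := by
  rcases le_total i j with h | h
  · simp [h]
  · simp [h, hA.apply]

namespace IsCenteredIndepL2

variable {Ω n : Type*} [MeasurableSpace Ω] {P : Measure Ω} [Fintype n] [DecidableEq n]
  {Y : Sym2 n → Ω → ℝ} {H : Ω → Matrix n n ℝ}

theorem integral_const_dotProduct_mulVec_const_sq_le {v : ℝ} (c : ℝ)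
    (hY : IsCenteredIndepL2 Y P) (hH : ∀ ω i j, H ω i j = Y s(i, j) ω)
    (hv : ∀ z, ∫ ω, Y z ω ^ 2 ∂P = v) (hv0 : 0 ≤ v) :
    ∫ ω, ((fun _ => c) ⬝ᵥ (H ω *ᵥ fun _ => c)) ^ 2 ∂P
      ≤ c ^ 4 * (2 * Fintype.card n ^ 2 * v) := by
  simp_rw [const_dotProduct_mulVec_const_sq, hH]
  rw [integral_const_mul, hY.integral_sum_mul hv]
  gcongr
  exact_mod_cast Sym2.card_filter_mk_eq_mk_le

variable [IsProbabilityMeasure P]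

theorem abs_integral_sum_entry_mul_mul_le {ι : Type*} [Fintype ι] [DecidableEq ι] {B : ℝ}
    (hY : IsCenteredIndepL2 Y P) (hB : ∀ z, ∫ ω, |Y z ω| ^ 3 ∂P ≤ B) (hB0 : 0 ≤ B)
    (u : ι → (n × n) × (n × n) × (n × n)) (hu : Function.Injective u) :
    |∫ ω, ∑ t, Y s((u t).1.1, (u t).1.2) ω *
        (Y s((u t).2.1.1, (u t).2.1.2) ω * Y s((u t).2.2.1, (u t).2.2.2) ω) ∂P|
      ≤ 4 * Fintype.card n ^ 2 * B := by
  refine (hY.abs_integral_sum_mul_mul_le hB hB0 _ _ _).trans ?_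
  gcongr
  norm_cast
  refine (card_le_card_of_injOn u (fun t ht => ?_) hu.injOn).trans
    Sym2.card_filter_mk_eq_mk_and_mk_eq_mk_le
  simpa using ht

theorem abs_integral_const_dotProduct_pow_three_mulVec_const_le {B : ℝ} (c : ℝ)
    (hY : IsCenteredIndepL2 Y P) (hH : ∀ ω i j, H ω i j = Y s(i, j) ω)
    (hB : ∀ z, ∫ ω, |Y z ω| ^ 3 ∂P ≤ B) (hB0 : 0 ≤ B) :
    |∫ ω, (fun _ => c) ⬝ᵥ (H ω ^ 3 *ᵥ fun _ => c) ∂P|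
      ≤ c ^ 2 * (4 * Fintype.card n ^ 2 * B) := by
  simp_rw [const_dotProduct_pow_three_mulVec_const, hH]
  rw [integral_const_mul, abs_mul, abs_of_nonneg (by positivity)]
  gcongr
  exact hY.abs_integral_sum_entry_mul_mul_le hB hB0
    (fun t : n × n × n × n => ((t.1, t.2.2.1), (t.2.2.1, t.2.2.2), (t.2.2.2, t.2.1)))
    fun t t' h => by simp_all [Prod.ext_iff]

theorem abs_integral_const_dotProduct_mulVec_const_mul_sq_le {B : ℝ} (c : ℝ)
    (hY : IsCenteredIndepL2 Y P) (hH : ∀ ω i j, H ω i j = Y s(i, j) ω)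
    (hB : ∀ z, ∫ ω, |Y z ω| ^ 3 ∂P ≤ B) (hB0 : 0 ≤ B) :
    |∫ ω, (fun _ => c) ⬝ᵥ (H ω *ᵥ fun _ => c) *
        (fun _ => c) ⬝ᵥ (H ω ^ 2 *ᵥ fun _ => c) ∂P|
      ≤ c ^ 4 * (4 * Fintype.card n ^ 2 * B) := by
  simp_rw [const_dotProduct_mulVec_const_mul_const_dotProduct_sq_mulVec_const, hH]
  rw [integral_const_mul, abs_mul, abs_of_nonneg (by positivity)]
  gcongr
  exact hY.abs_integral_sum_entry_mul_mul_le hB hB0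
    (fun t : (n × n) × (n × n) × n => (t.1, (t.2.1.1, t.2.2), (t.2.2, t.2.1.2)))
    fun t t' h => by simp_all [Prod.ext_iff]

theorem abs_integral_const_dotProduct_mulVec_const_pow_three_le {B : ℝ} (c : ℝ)
    (hY : IsCenteredIndepL2 Y P) (hH : ∀ ω i j, H ω i j = Y s(i, j) ω)
    (hB : ∀ z, ∫ ω, |Y z ω| ^ 3 ∂P ≤ B) (hB0 : 0 ≤ B) :
    |∫ ω, ((fun _ => c) ⬝ᵥ (H ω *ᵥ fun _ => c)) ^ 3 ∂P|
      ≤ c ^ 6 * (4 * Fintype.card n ^ 2 * B) := by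
  simp_rw [const_dotProduct_mulVec_const_pow_three, hH]
  rw [integral_const_mul, abs_mul, abs_of_nonneg (by positivity)]
  gcongr
  exact hY.abs_integral_sum_entry_mul_mul_le hB hB0 id Function.injective_id

end IsCenteredIndepL2

/-- **Moment bounds for the quadratic forms of a Wigner-type matrix.**
Let `H` be a random real symmetric `N × N` matrix whose entries `{H i j : i ≤ j}`
are mutually independent with `E[H i j] = 0`, `E[(H i j)²] = 1/N` and
`E[|H i j|³] ≤ (C₂/√N)³` (extended by symmetry), and let `e` be the unit vector all
of whose entries equal `1/√N`. Then:
(i) `E[⟨e, H e⟩²] ≤ 3/N`; (ii) `|E[⟨e, H³ e⟩]| ≤ 8C₂³/√N`;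
(iii) `|E[⟨e, H e⟩ ⟨e, H² e⟩]| ≤ 8C₂³/(N√N)`; (iv) `|E[⟨e, H e⟩³]| ≤ 8C₂³/(N²√N)`. -/
theorem stmt_19 (N : ℕ) (hN : 1 ≤ N) (C₂ : ℝ) (hC₂ : 0 < C₂)
    (Ω : Type) [MeasurableSpace Ω] (P : Measure Ω) [IsProbabilityMeasure P]
    (H : Ω → Matrix (Fin N) (Fin N) ℝ)
    (hmeas : ∀ i j, Measurable (fun ω => H ω i j))
    (hsymm : ∀ ω, (H ω).IsSymm)
    (hindep : iIndepFun
      (fun (q : {ij : Fin N × Fin N // ij.1 ≤ ij.2}) ω => H ω q.1.1 q.1.2) P)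
    (hmean : ∀ i j : Fin N, i ≤ j → (∫ ω, H ω i j ∂P) = 0)
    (hvar : ∀ i j : Fin N, i ≤ j → (∫ ω, (H ω i j) ^ 2 ∂P) = 1 / N)
    (hthird : ∀ i j : Fin N, i ≤ j →
      (∫ ω, |H ω i j| ^ 3 ∂P) ≤ (C₂ / Real.sqrt N) ^ 3)
    (e : Fin N → ℝ) (he : e = fun _ => 1 / Real.sqrt N) :
    (∫ ω, (dotProduct e (H ω *ᵥ e)) ^ 2 ∂P) ≤ 3 / N ∧
    |∫ ω, dotProduct e ((H ω ^ 3) *ᵥ e) ∂P| ≤ 8 * C₂ ^ 3 / Real.sqrt N ∧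
    |∫ ω, dotProduct e (H ω *ᵥ e)
        * dotProduct e ((H ω ^ 2) *ᵥ e) ∂P|
      ≤ 8 * C₂ ^ 3 / ((N : ℝ) * Real.sqrt N) ∧
    |∫ ω, (dotProduct e (H ω *ᵥ e)) ^ 3 ∂P|
      ≤ 8 * C₂ ^ 3 / ((N : ℝ) ^ 2 * Real.sqrt N) := by
  subst he
  set Y : Sym2 (Fin N) → Ω → ℝ := fun z ω =>
    H ω (Sym2.sortEquiv z).1.1 (Sym2.sortEquiv z).1.2
  have hH : ∀ ω i j, H ω i j = Y s(i, j) ω := fun ω i j => by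
    simp [Y, (hsymm ω).apply_min_max]
  have hvarY : ∀ z, ∫ ω, Y z ω ^ 2 ∂P = 1 / N := fun z => hvar _ _ (Sym2.sortEquiv z).2
  have hsq : ∀ z, Integrable (fun ω => Y z ω ^ 2) P := fun z =>
    .of_integral_ne_zero (by rw [hvarY]; positivity)
  have hY : IsCenteredIndepL2 Y P :=
    { measurable := fun z => hmeas _ _
      iIndepFun := hindep.precomp Sym2.sortEquiv.injective
      integral_eq_zero := fun z => hmean _ _ (Sym2.sortEquiv z).2
      memLp_two := fun z =>
        (memLp_two_iff_integrable_sq (hmeas _ _).aestronglyMeasurable).2 (hsq z) }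
  have hthirdY : ∀ z, ∫ ω, |Y z ω| ^ 3 ∂P ≤ (C₂ / Real.sqrt N) ^ 3 :=
    fun z => hthird _ _ (Sym2.sortEquiv z).2
  have hB0 : 0 ≤ (C₂ / Real.sqrt N) ^ 3 := by positivity
  refine ⟨(hY.integral_const_dotProduct_mulVec_const_sq_le _ hH hvarY (by positivity)).trans ?_,
    (hY.abs_integral_const_dotProduct_pow_three_mulVec_const_le _ hH hthirdY hB0).trans ?_,
    (hY.abs_integral_const_dotProduct_mulVec_const_mul_sq_le _ hH hthirdY hB0).trans ?_,
    (hY.abs_integral_const_dotProduct_mulVec_const_pow_three_le _ hH hthirdY hB0).trans ?_⟩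
  all_goals
    have hs : 0 < Real.sqrt N := Real.sqrt_pos.2 (by exact_mod_cast hN)
    have hs2 : Real.sqrt N ^ 2 = N := Real.sq_sqrt (Nat.cast_nonneg _)
    generalize Real.sqrt N = s at hs hs2 ⊢
    rw [Fintype.card_fin, ← hs2]
    field_simp
    nlinarith [pow_pos hC₂ 3, pow_pos hs 5]
end
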